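/- Fix n ∈ ℕ, n ≥ 1, and let D = [0,1]ⁿ. Let g : D → ℝ be Lipschitz with constant l_g, let x₁,…,x_N be i.i.d. uniform samples from D with outputs yᵢ satisfying ‖g(xᵢ) − yᵢ‖ ≤ ε̄, fix ρ > 0, ε > ε̄, δ ∈ (0,1), and let l* be the minimal Lipschitz constant over all Lipschitz f : D → ℝ with max_i ‖yᵢ − f(xᵢ)‖ ≤ ε. Then there exist constants k₁ > 0, k₂ > 0 and N₀ ∈ ℕ depending only on n such that for all N ≥ N₀, with probability at least 1 − δ, every Lipschitz f : D → ℝ with max_i ‖yᵢ − f(xᵢ)‖ ≤ ε and Lip(f) ≤ l* + ρ satisfies sup_{x∈D} ‖g(x) − f(x)‖ ≤ (2·l_g + ρ)·k₁·(log(k₂·N/δ)/N)^{1/n} + 2ε. -/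

import Mathlib

/-!
Cut the cube into `m ^ n` grid cells of side `1 / m`. If every cell contains a sample, every point
of the cube lies within `√n / m` of a sample `xᵢ`. Since `g` itself fits the data within `ε`, any
`f` with `Lip f ≤ l* + ρ` is `(l_g + ρ)`-Lipschitz, so at such a point
`|g - f| ≤ l_g √n/m + ε̄ + ε + (l_g + ρ) √n/m`. By the union bound some cell is empty with
probability at most `m ^ n (1 - m ^ (-n)) ^ N ≤ m ^ n exp (-N / m ^ n)`, which is below `δ` for
`m = ⌊(N / log (3N/δ)) ^ (1/n)⌋` (or `m = 1` when this is `0` or `1`).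
-/

open scoped NNReal
open MeasureTheory

noncomputable def lipSemi {n : ℕ} (D : Set (EuclideanSpace ℝ (Fin n)))
    (f : EuclideanSpace ℝ (Fin n) → ℝ) : ℝ :=
  sInf {γ : ℝ | 0 ≤ γ ∧ ∀ x ∈ D, ∀ y ∈ D, ‖f x - f y‖ ≤ γ * ‖x - y‖}

open Set Real

section LipSemi

variable {n : ℕ} {D : Set (EuclideanSpace ℝ (Fin n))} {f : EuclideanSpace ℝ (Fin n) → ℝ}

lemma lipSemi_nonneg : 0 ≤ lipSemi D f :=
  Real.sInf_nonneg fun _ h => h.1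

lemma lipSemi_le {c : ℝ} (hc : 0 ≤ c) (h : ∀ x ∈ D, ∀ y ∈ D, ‖f x - f y‖ ≤ c * ‖x - y‖) :
    lipSemi D f ≤ c :=
  csInf_le ⟨0, fun _ h => h.1⟩ ⟨hc, h⟩

lemma LipschitzOnWith.norm_sub_le_lipSemi_mul {C : ℝ≥0} (hf : LipschitzOnWith C f D)
    {x y : EuclideanSpace ℝ (Fin n)} (hx : x ∈ D) (hy : y ∈ D) :
    ‖f x - f y‖ ≤ lipSemi D f * ‖x - y‖ := by
  rcases eq_or_ne x y with rfl | hxy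
  · simp
  have hpos : 0 < ‖x - y‖ := norm_pos_iff.2 (sub_ne_zero.2 hxy)
  rw [← div_le_iff₀ hpos]
  refine le_csInf ⟨C, C.coe_nonneg, fun a ha b hb => ?_⟩ fun γ hγ =>
    (div_le_iff₀ hpos).2 (hγ.2 x hx y hy)
  simpa only [dist_eq_norm] using hf.dist_le_mul a ha b hb

/-- The paper's `l*`. -/
noncomputable def minFitLip {ι : Type*} (D : Set (EuclideanSpace ℝ (Fin n)))
    (ω : ι → EuclideanSpace ℝ (Fin n)) (y : ι → ℝ) (ε : ℝ) : ℝ :=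
  sInf {l : ℝ | ∃ f' : EuclideanSpace ℝ (Fin n) → ℝ, (∃ C : ℝ≥0, LipschitzOnWith C f' D) ∧
    (∀ i, ‖y i - f' (ω i)‖ ≤ ε) ∧ l = lipSemi D f'}

lemma minFitLip_le_lipSemi {ι : Type*} {ω : ι → EuclideanSpace ℝ (Fin n)} {y : ι → ℝ} {ε : ℝ}
    {C : ℝ≥0} (hf : LipschitzOnWith C f D) (hfy : ∀ i, ‖y i - f (ω i)‖ ≤ ε) :
    minFitLip D ω y ε ≤ lipSemi D f :=
  csInf_le ⟨0, by rintro _ ⟨f', -, -, rfl⟩; exact lipSemi_nonneg⟩ ⟨f, ⟨C, hf⟩, hfy, rfl⟩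

theorem norm_sub_le_of_norm_sub_sample_le {ι : Type*} {ω : ι → EuclideanSpace ℝ (Fin n)}
    {y : ι → ℝ} {g : EuclideanSpace ℝ (Fin n) → ℝ} {lg εbar ε ρ r : ℝ} {C : ℝ≥0} (hlg : 0 ≤ lg)
    (hg : ∀ x ∈ D, ∀ y ∈ D, ‖g x - g y‖ ≤ lg * ‖x - y‖) (hgy : ∀ i, ‖g (ω i) - y i‖ ≤ εbar)
    (hεbar : εbar ≤ ε) (hf : LipschitzOnWith C f D) (hfy : ∀ i, ‖y i - f (ω i)‖ ≤ ε)
    (hflip : lipSemi D f ≤ minFitLip D ω y ε + ρ) {x : EuclideanSpace ℝ (Fin n)} (hx : x ∈ D)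
    {i : ι} (hi : ω i ∈ D) (hr : ‖x - ω i‖ ≤ r) :
    ‖g x - f x‖ ≤ (2 * lg + ρ) * r + 2 * ε := by
  have hglip : LipschitzOnWith lg.toNNReal g D :=
    LipschitzOnWith.of_dist_le' fun a ha b hb => by simpa only [dist_eq_norm] using hg a ha b hb
  have hgfit : ∀ i, ‖y i - g (ω i)‖ ≤ ε := fun i => by
    rw [norm_sub_rev]; exact (hgy i).trans hεbar
  have hflg : lipSemi D f ≤ lg + ρ := hflip.trans <| by
    gcongr; exact (minFitLip_le_lipSemi hglip hgfit).trans (lipSemi_le hlg hg)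
  have hfx : ‖f (ω i) - f x‖ ≤ lipSemi D f * ‖x - ω i‖ := by
    rw [norm_sub_rev x]; exact hf.norm_sub_le_lipSemi_mul hi hx
  calc ‖g x - f x‖
      = ‖(g x - g (ω i)) + (g (ω i) - y i) + (y i - f (ω i)) + (f (ω i) - f x)‖ := by ring_nf
    _ ≤ ‖g x - g (ω i)‖ + ‖g (ω i) - y i‖ + ‖y i - f (ω i)‖ + ‖f (ω i) - f x‖ := norm_add₄_le ..
    _ ≤ lg * r + ε + ε + (lg + ρ) * r := by
        gcongr
        · exact (hg x hx (ω i) hi).trans (by gcongr)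
        · exact (hgy i).trans hεbar
        · exact hfy i
        · exact hfx.trans (mul_le_mul hflg hr (norm_nonneg _) (lipSemi_nonneg.trans hflg))
    _ = (2 * lg + ρ) * r + 2 * ε := by ring

end LipSemi

lemma EuclideanSpace.norm_le_sqrt_card_mul {ι : Type*} [Fintype ι] {x : EuclideanSpace ℝ ι}
    {c : ℝ} (hc : 0 ≤ c) (h : ∀ i, |x i| ≤ c) : ‖x‖ ≤ √(Fintype.card ι) * c := by
  rw [EuclideanSpace.norm_eq, ← sqrt_sq hc, ← sqrt_mul (Nat.cast_nonneg _)]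
  gcongr
  calc ∑ i, ‖x i‖ ^ 2 ≤ ∑ _i : ι, c ^ 2 := by
        gcongr with i
        exact norm_eq_abs (x i) ▸ h i
    _ = Fintype.card ι * c ^ 2 := by simp

section Boxes

variable {ι : Type*} (a b : ι → ℝ)

lemma EuclideanSpace.setOf_forall_mem_Icc_eq :
    {x : EuclideanSpace ℝ ι | ∀ i, x i ∈ Icc (a i) (b i)} =
      WithLp.ofLp ⁻¹' univ.pi fun i => Icc (a i) (b i) := by
  ext x; simp only [mem_preimage, mem_univ_pi]; rfl

lemma EuclideanSpace.measurableSet_setOf_forall_mem_Icc [Fintype ι] :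
    MeasurableSet {x : EuclideanSpace ℝ ι | ∀ i, x i ∈ Icc (a i) (b i)} := by
  rw [EuclideanSpace.setOf_forall_mem_Icc_eq]
  exact (MeasurableSet.univ_pi fun _ => measurableSet_Icc).preimage
    (PiLp.volume_preserving_ofLp ι).measurable

lemma EuclideanSpace.volume_setOf_forall_mem_Icc [Fintype ι] :
    volume {x : EuclideanSpace ℝ ι | ∀ i, x i ∈ Icc (a i) (b i)} =
      ∏ i, ENNReal.ofReal (b i - a i) := by
  rw [EuclideanSpace.setOf_forall_mem_Icc_eq, (PiLp.volume_preserving_ofLp ι).measure_preimage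
    (MeasurableSet.univ_pi fun _ => measurableSet_Icc).nullMeasurableSet, volume_pi_pi]
  simp only [Real.volume_Icc]

end Boxes

def unitCube (n : ℕ) : Set (EuclideanSpace ℝ (Fin n)) :=
  {x | ∀ i, x i ∈ Icc (0 : ℝ) 1}

def gridCell {n : ℕ} (m : ℕ) (j : Fin n → Fin m) : Set (EuclideanSpace ℝ (Fin n)) :=
  {x | ∀ i, x i ∈ Icc ((j i : ℝ) / m) ((j i + 1 : ℝ) / m)}

section Grid

variable {n m : ℕ}

lemma volume_unitCube : volume (unitCube n) = 1 := by
  rw [unitCube, EuclideanSpace.volume_setOf_forall_mem_Icc (fun _ => 0) fun _ => 1]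
  simp

instance : IsProbabilityMeasure (volume.restrict (unitCube n)) :=
  ⟨by rw [Measure.restrict_apply_univ, volume_unitCube]⟩

lemma measurableSet_gridCell (j : Fin n → Fin m) : MeasurableSet (gridCell m j) :=
  EuclideanSpace.measurableSet_setOf_forall_mem_Icc _ _

lemma volume_gridCell (j : Fin n → Fin m) :
    volume (gridCell m j) = ENNReal.ofReal ((1 / m) ^ n) := by
  have hwidth : ∀ i, ((j i : ℝ) + 1) / m - (j i : ℝ) / m = 1 / m := fun i => by ring
  rw [gridCell, EuclideanSpace.volume_setOf_forall_mem_Icc]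
  simp only [hwidth, Finset.prod_const, Finset.card_univ, Fintype.card_fin]
  rw [ENNReal.ofReal_pow (by positivity)]

lemma gridCell_subset_unitCube (j : Fin n → Fin m) : gridCell m j ⊆ unitCube n := by
  intro x hx i
  have hm : (0 : ℝ) < m := Nat.cast_pos.2 (j i).pos
  have hj : (j i : ℝ) + 1 ≤ m := by exact_mod_cast (j i).2
  exact ⟨(by positivity : (0 : ℝ) ≤ (j i : ℝ) / m).trans (hx i).1,
    (hx i).2.trans ((div_le_one hm).2 hj)⟩

lemma exists_lt_mem_Icc_div {m : ℕ} (hm : 0 < m) {t : ℝ} (ht : t ∈ Icc (0 : ℝ) 1) :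
    ∃ k < m, t ∈ Icc ((k : ℝ) / m) ((k + 1 : ℝ) / m) := by
  have hm' : (0 : ℝ) < m := Nat.cast_pos.2 hm
  rcases ht.2.lt_or_eq with ht1 | rfl
  · refine ⟨⌊t * m⌋₊, (Nat.floor_lt (by nlinarith [ht.1])).2 (by nlinarith), ?_, ?_⟩
    · rw [div_le_iff₀ hm']; exact Nat.floor_le (by nlinarith [ht.1])
    · rw [le_div_iff₀ hm']; exact (Nat.lt_floor_add_one _).le
  · refine ⟨m - 1, Nat.sub_lt hm one_pos, ?_, ?_⟩
    · rw [Nat.cast_pred hm, div_le_one hm']; linarith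
    · rw [Nat.cast_pred hm, sub_add_cancel, div_self hm'.ne']

lemma exists_mem_gridCell (hm : 0 < m) {x : EuclideanSpace ℝ (Fin n)} (hx : x ∈ unitCube n) :
    ∃ j : Fin n → Fin m, x ∈ gridCell m j := by
  choose k hk hxk using fun i => exists_lt_mem_Icc_div hm (hx i)
  exact ⟨fun i => ⟨k i, hk i⟩, hxk⟩

lemma norm_sub_le_of_mem_gridCell {j : Fin n → Fin m} {x y : EuclideanSpace ℝ (Fin n)}
    (hx : x ∈ gridCell m j) (hy : y ∈ gridCell m j) : ‖x - y‖ ≤ √n / m := by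
  rw [div_eq_mul_one_div]
  simpa using EuclideanSpace.norm_le_sqrt_card_mul (x := x - y) (by positivity) fun i => by
    have := hx i; have := hy i
    simp only [mem_Icc, add_div, one_div] at *
    rw [PiLp.sub_apply, abs_sub_le_iff]
    constructor <;> linarith

end Grid

lemma ofReal_one_sub_le_measure {α : Type*} [MeasurableSpace α] {μ : Measure α}
    [IsProbabilityMeasure μ] {s : Set α} {δ : ℝ} (hδ : 0 ≤ δ) (h : μ sᶜ ≤ ENNReal.ofReal δ) :
    ENNReal.ofReal (1 - δ) ≤ μ s := by
  rw [ENNReal.ofReal_sub _ hδ, ENNReal.ofReal_one, tsub_le_iff_right]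
  calc 1 = μ (s ∪ sᶜ) := by rw [union_compl_self, measure_univ]
    _ ≤ μ s + μ sᶜ := measure_union_le _ _
    _ ≤ μ s + ENNReal.ofReal δ := by gcongr

lemma measure_pi_compl_setOf_forall_exists_mem_le {α ι J : Type*} [MeasurableSpace α]
    [Fintype ι] [Fintype J] (μ : Measure α) [IsProbabilityMeasure μ] {A : J → Set α}
    (hA : ∀ j, MeasurableSet (A j)) {p : ENNReal} (hp : ∀ j, p ≤ μ (A j)) :
    Measure.pi (fun _ : ι => μ) {ω | ∀ j, ∃ i, ω i ∈ A j}ᶜ ≤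
      Fintype.card J * (1 - p) ^ Fintype.card ι := by
  have hcompl : {ω : ι → α | ∀ j, ∃ i, ω i ∈ A j}ᶜ = ⋃ j, univ.pi fun _ => (A j)ᶜ := by
    ext ω; simp
  calc Measure.pi (fun _ : ι => μ) {ω | ∀ j, ∃ i, ω i ∈ A j}ᶜ
      ≤ ∑ j, Measure.pi (fun _ : ι => μ) (univ.pi fun _ => (A j)ᶜ) :=
        hcompl ▸ measure_iUnion_fintype_le _ _
    _ ≤ ∑ _j : J, (1 - p) ^ Fintype.card ι := by
        gcongr with j
        rw [Measure.pi_pi, Finset.prod_const, Finset.card_univ, prob_compl_eq_one_sub (hA j)]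
        gcongr
        exact hp j
    _ = Fintype.card J * (1 - p) ^ Fintype.card ι := by simp

lemma measure_compl_setOf_forall_exists_mem_gridCell_le {n m : ℕ} (N : ℕ) :
    Measure.pi (fun _ : Fin N => volume.restrict (unitCube n))
        {ω | ∀ j : Fin n → Fin m, ∃ i, ω i ∈ gridCell m j}ᶜ ≤
      ENNReal.ofReal (m ^ n * (1 - (1 / m) ^ n) ^ N) := by
  have hcell : ∀ j : Fin n → Fin m,
      ENNReal.ofReal ((1 / m) ^ n) ≤ volume.restrict (unitCube n) (gridCell m j) := fun j => by
    rw [Measure.restrict_apply (measurableSet_gridCell j),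
      inter_eq_left.2 (gridCell_subset_unitCube j), volume_gridCell]
  refine (measure_pi_compl_setOf_forall_exists_mem_le _ measurableSet_gridCell hcell).trans_eq ?_
  have hp : (1 / m : ℝ) ^ n ≤ 1 :=
    pow_le_one₀ (by positivity) (one_div (m : ℝ) ▸ Nat.cast_inv_le_one m)
  rw [ENNReal.ofReal_mul (by positivity), ENNReal.ofReal_pow (sub_nonneg.2 hp),
    ENNReal.ofReal_sub _ (by positivity)]
  simp

lemma mul_one_sub_inv_pow_le {M L : ℝ} {N : ℕ} (hM : 1 ≤ M) (hL : 1 ≤ L) (hML : M * L ≤ N) :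
    M * (1 - M⁻¹) ^ N ≤ N * exp (-L) := by
  have hM0 : 0 < M := one_pos.trans_le hM
  calc M * (1 - M⁻¹) ^ N ≤ M * exp (-M⁻¹) ^ N := by
        gcongr
        · exact sub_nonneg.2 (inv_le_one_of_one_le₀ hM)
        · exact one_sub_le_exp_neg _
    _ = M * exp (-(N / M)) := by rw [← exp_nat_mul]; ring_nf
    _ ≤ N * exp (-L) := by
        gcongr
        · nlinarith
        · rw [le_div_iff₀ hM0]; linarith

lemma exists_gridSize {n N : ℕ} (hn : n ≠ 0) (hN : N ≠ 0) {δ : ℝ} (hδ0 : 0 < δ) (hδ1 : δ < 1) :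
    ∃ m : ℕ, 0 < m ∧ √n / m ≤ 2 * √n * (log (3 * N / δ) / N) ^ ((1 : ℝ) / n) ∧
      (m : ℝ) ^ n * (1 - (1 / m) ^ n) ^ N ≤ δ := by
  set L := log (3 * N / δ)
  have hN1 : (1 : ℝ) ≤ N := Nat.one_le_cast.2 (Nat.one_le_iff_ne_zero.2 hN)
  have hL : 1 ≤ L := by
    rw [le_log_iff_exp_le (by positivity), le_div_iff₀ hδ0]
    nlinarith [exp_one_lt_three]
  set u := ((N : ℝ) / L) ^ ((1 : ℝ) / n) with hu_def
  have hu : 0 < u := by positivity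
  have hun : u ^ n = N / L := by rw [hu_def, one_div, rpow_inv_natCast_pow (by positivity) hn]
  have hLN : (L / N) ^ ((1 : ℝ) / n) = u⁻¹ := by rw [← inv_div, inv_rpow (by positivity)]
  refine ⟨max 1 ⌊u⌋₊, le_max_left 1 _, ?_, ?_⟩
  · have hm : u ≤ 2 * (max 1 ⌊u⌋₊ : ℕ) := by
      have hfloor := Nat.lt_floor_add_one u
      have hone : (1 : ℝ) ≤ (max 1 ⌊u⌋₊ : ℕ) := by exact_mod_cast le_max_left 1 _
      have hmax : (⌊u⌋₊ : ℝ) ≤ (max 1 ⌊u⌋₊ : ℕ) := by exact_mod_cast le_max_right 1 _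
      linarith
    calc √n / (max 1 ⌊u⌋₊ : ℕ) ≤ √n / (u / 2) :=
          div_le_div_of_nonneg_left (sqrt_nonneg _) (by positivity) (by linarith)
      _ = 2 * √n * (L / N) ^ ((1 : ℝ) / n) := by rw [hLN]; ring
  · rcases le_or_gt ⌊u⌋₊ 1 with h | h
    · rw [max_eq_left h]
      simp [zero_pow hN, hδ0.le]
    rw [max_eq_right h.le]
    have hM : (1 : ℝ) ≤ (⌊u⌋₊ : ℝ) ^ n := one_le_pow₀ (by exact_mod_cast h.le)
    have hML : (⌊u⌋₊ : ℝ) ^ n * L ≤ N := by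
      rw [← le_div_iff₀ (by positivity), ← hun]
      gcongr
      exact Nat.floor_le hu.le
    calc (⌊u⌋₊ : ℝ) ^ n * (1 - (1 / ⌊u⌋₊) ^ n) ^ N
        = (⌊u⌋₊ : ℝ) ^ n * (1 - ((⌊u⌋₊ : ℝ) ^ n)⁻¹) ^ N := by rw [one_div, inv_pow]
      _ ≤ N * exp (-L) := mul_one_sub_inv_pow_le hM hL hML
      _ = δ / 3 := by
        rw [exp_neg, exp_log (by positivity)]
        field_simp
      _ ≤ δ := by linarith

theorem stmt14 (n : ℕ) (hn : 1 ≤ n)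
    (D : Set (EuclideanSpace ℝ (Fin n)))
    (hD : D = {x : EuclideanSpace ℝ (Fin n) | ∀ i, x i ∈ Set.Icc (0 : ℝ) 1}) :
    ∃ k₁ > (0 : ℝ), ∃ k₂ > (0 : ℝ), ∃ N₀ : ℕ,
      ∀ (g : EuclideanSpace ℝ (Fin n) → ℝ) (lg εbar ε ρ δ : ℝ),
        0 ≤ lg →
        (∀ x ∈ D, ∀ y ∈ D, ‖g x - g y‖ ≤ lg * ‖x - y‖) →
        0 ≤ εbar → εbar < ε → 0 < ρ → 0 < δ → δ < 1 →
        ∀ N : ℕ, N₀ ≤ N →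
        ∀ y : (Fin N → EuclideanSpace ℝ (Fin n)) → Fin N → ℝ,
          (∀ ω i, ‖g (ω i) - y ω i‖ ≤ εbar) →
          ENNReal.ofReal (1 - δ) ≤
            (Measure.pi fun _ : Fin N => volume.restrict D)
              {ω | ∀ f : EuclideanSpace ℝ (Fin n) → ℝ,
                (∃ C : ℝ≥0, LipschitzOnWith C f D) →
                (∀ i, ‖y ω i - f (ω i)‖ ≤ ε) →
                lipSemi D f ≤ sInf {l : ℝ | ∃ f' : EuclideanSpace ℝ (Fin n) → ℝ,
                    (∃ C : ℝ≥0, LipschitzOnWith C f' D) ∧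
                    (∀ i, ‖y ω i - f' (ω i)‖ ≤ ε) ∧
                    l = lipSemi D f'} + ρ →
                ∀ x ∈ D, ‖g x - f x‖ ≤
                  (2 * lg + ρ) * (k₁ * (Real.log (k₂ * N / δ) / N) ^ ((1 : ℝ) / n)) + 2 * ε} := by
  refine ⟨2 * √n, by positivity, 3, by norm_num, 1, ?_⟩
  intro g lg εbar ε ρ δ hlg hg _ hεbar hρ hδ0 hδ1 N hN y hy
  obtain rfl : D = unitCube n := hD
  obtain ⟨m, hm, hmesh, hfail⟩ := exists_gridSize (n := n) (N := N) (by omega) (by omega) hδ0 hδ1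
  have hempty := (measure_compl_setOf_forall_exists_mem_gridCell_le (n := n) (m := m) N).trans
    (ENNReal.ofReal_le_ofReal hfail)
  refine (ofReal_one_sub_le_measure hδ0.le hempty).trans
    (measure_mono fun ω hω f ⟨C, hf⟩ hfy hflip x hx => ?_)
  obtain ⟨j, hxj⟩ := exists_mem_gridCell hm hx
  obtain ⟨i, hij⟩ := hω j
  calc ‖g x - f x‖ ≤ (2 * lg + ρ) * (√n / m) + 2 * ε :=
        norm_sub_le_of_norm_sub_sample_le hlg hg (hy ω) hεbar.le hf hfy hflip hx
          (gridCell_subset_unitCube j hij) (norm_sub_le_of_mem_gridCell hxj hij)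
    _ ≤ _ := by gcongr
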